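/- arXiv:2202.10531 — 5 statements merged into one kernel-verified Lean document; each statement's English description precedes it below -/
import Mathlib

section
/- Let G be a group equipped with a σ-finite left-invariant Borel measure μ and a left-invariant metric d, with measurable group operations; write |x| := d(x, e). Let 0 ≤ θ < 1, let K ∈ L¹(G, μ), let x₀ ∈ G, r > 0, and let b ∈ L¹(G, μ) be supported in the closed ball {y : d(y, x₀) ≤ r}. Set R := r^{1/(1-θ)} and assume 0 < μ(B(e,R)) < ∞, and let φ := μ(B(e,R))^{-1} 1_{B(e,R)}. Then ∫_{{x : d(x,x₀) ≥ 3r}} | (b ⋆ K)(x) - (b ⋆ φ ⋆ K)(x) | dμ(x) ≤ ‖b‖_{L¹} · sup_{y : |y| ≤ R} ∫_{{z : |z| ≥ 2r}} |K(y⁻¹ z) - K(z)| dμ(z). -/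
/-!
By associativity of convolution, `b ⋆ K - (b ⋆ φ) ⋆ K = b ⋆ (K - φ ⋆ K)`, and since `∫ φ = 1`,
`(K - φ ⋆ K)(z) = ∫ φ(t) (K(z) - K(t⁻¹z)) dt`. If `d(y, x₀) ≤ r` and `d(x, x₀) ≥ 3r`, left
invariance of `d` gives `|y⁻¹x| = d(x, y) ≥ 2r`. Two applications of Minkowski's integral
inequality therefore bound the left-hand side by
`‖b‖₁ ‖φ‖₁ sup_{t ∈ supp φ} ∫_{|z| ≥ 2r} |K(t⁻¹z) - K(z)| dz`, and `‖φ‖₁ = 1`.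
-/

open MeasureTheory
open scoped ENNReal

/-- Convolution of two functions on a group `G` with respect to a measure `μ`:
`(u ⋆ v)(x) = ∫ u(y) v(y⁻¹ x) dμ(y)`. -/
noncomputable def groupConv {G : Type*} [Group G] [MeasurableSpace G]
    (μ : Measure G) (u v : G → ℂ) (x : G) : ℂ :=
  ∫ y, u y * v (y⁻¹ * x) ∂μ

open Function

section NormalizedIndicator

variable {α : Type*} [MeasurableSpace α] {μ : Measure α} {s : Set α}

theorem integral_indicator_inv_measureReal (hs : MeasurableSet s) (h0 : μ s ≠ 0)
    (hfin : μ s ≠ ∞) : ∫ x, s.indicator (fun _ => ((μ s).toReal⁻¹ : ℂ)) x ∂μ = 1 := by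
  rw [integral_indicator_const _ hs, Complex.real_smul, ← Complex.ofReal_inv, ← Complex.ofReal_mul,
    measureReal_def, mul_inv_cancel₀ (ENNReal.toReal_ne_zero.2 ⟨h0, hfin⟩), Complex.ofReal_one]

theorem lintegral_enorm_indicator_inv_measureReal (hs : MeasurableSet s) (h0 : μ s ≠ 0)
    (hfin : μ s ≠ ∞) : ∫⁻ x, ‖s.indicator (fun _ => ((μ s).toReal⁻¹ : ℂ)) x‖ₑ ∂μ = 1 := by
  simp_rw [enorm_indicator_eq_indicator_enorm]
  rw [lintegral_indicator_const hs, ← Complex.ofReal_inv, enorm_eq_nnnorm, Complex.nnnorm_real,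
    ← enorm_eq_nnnorm, Real.enorm_eq_ofReal (by positivity),
    ENNReal.ofReal_inv_of_pos (ENNReal.toReal_pos h0 hfin),
    ENNReal.ofReal_toReal hfin, ENNReal.inv_mul_cancel h0 hfin]

end NormalizedIndicator

theorem lintegral_enorm_integral_le {α β E : Type*} [MeasurableSpace α] [MeasurableSpace β]
    [NormedAddCommGroup E] [NormedSpace ℝ E] {μ : Measure α} {ν : Measure β} [SFinite μ]
    [SFinite ν] {F : α → β → E} (hF : AEStronglyMeasurable (uncurry F) (μ.prod ν)) :
    ∫⁻ x, ‖∫ y, F y x ∂μ‖ₑ ∂ν ≤ ∫⁻ y, ∫⁻ x, ‖F y x‖ₑ ∂ν ∂μ :=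
  calc ∫⁻ x, ‖∫ y, F y x ∂μ‖ₑ ∂ν ≤ ∫⁻ x, ∫⁻ y, ‖F y x‖ₑ ∂μ ∂ν :=
        lintegral_mono fun _ => enorm_integral_le_lintegral_enorm _
    _ = ∫⁻ y, ∫⁻ x, ‖F y x‖ₑ ∂ν ∂μ := (lintegral_lintegral_swap hF.enorm).symm

theorem lintegral_enorm_mul_le_of_support_subset {α E : Type*} [MeasurableSpace α]
    [NormedAddCommGroup E] {μ : Measure α} {f : α → E} (hf : AEStronglyMeasurable f μ)
    {s : Set α} {I : α → ℝ≥0∞} {C : ℝ≥0∞} (hs : support f ⊆ s) (hI : ∀ y ∈ s, I y ≤ C) :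
    ∫⁻ y, ‖f y‖ₑ * I y ∂μ ≤ (∫⁻ y, ‖f y‖ₑ ∂μ) * C := by
  rw [← lintegral_mul_const'' _ hf.enorm]
  refine lintegral_mono fun y => ?_
  by_cases hy : f y = 0
  · simp [hy]
  · exact mul_le_mul_right (hI y (hs hy)) _

theorem dist_sub_dist_le_dist_inv_mul_one {G : Type*} [Group G] [PseudoMetricSpace G]
    (hd : ∀ a x y : G, dist (a * x) (a * y) = dist x y) (x y x₀ : G) :
    dist x x₀ - dist y x₀ ≤ dist (y⁻¹ * x) 1 := by
  have hdist : dist (y⁻¹ * x) 1 = dist x y := by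
    simpa only [mul_inv_cancel_left, mul_one] using (hd y (y⁻¹ * x) 1).symm
  linarith [dist_triangle x y x₀]

theorem setLIntegral_comp_inv_mul_le {G : Type*} [Group G] [MeasurableSpace G]
    [MeasurableMul G] {μ : Measure G} [μ.IsMulLeftInvariant] (f : G → ℝ≥0∞) {A Z : Set G} {y : G}
    (h : ∀ x ∈ A, y⁻¹ * x ∈ Z) :
    ∫⁻ x in A, f (y⁻¹ * x) ∂μ ≤ ∫⁻ z in Z, f z ∂μ :=
  calc ∫⁻ x in A, f (y⁻¹ * x) ∂μ ≤ ∫⁻ x in (y⁻¹ * ·) ⁻¹' Z, f (y⁻¹ * x) ∂μ :=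
        lintegral_mono_set h
    _ = ∫⁻ z in Z, f z ∂μ :=
      (measurePreserving_mul_left μ y⁻¹).setLIntegral_comp_preimage_emb
        (measurableEmbedding_mulLeft y⁻¹) f Z

section Group

variable {G : Type*} [Group G] [MeasurableSpace G] [MeasurableMul₂ G] [MeasurableInv G]
  {μ : Measure G} [SigmaFinite μ] [μ.IsMulLeftInvariant] {u v w : G → ℂ}

theorem integrable_prod_mul_inv_mul {α : Type*} [MeasurableSpace α] {ν : Measure α} [SFinite ν]
    {f : α → ℂ} {g : α → G} (hf : Integrable f ν) (hg : Measurable g) (hw : Integrable w μ) :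
    Integrable (fun p : α × G => f p.1 * w ((g p.1)⁻¹ * p.2)) (ν.prod μ) := by
  have hshear : MeasurePreserving (fun p : α × G => (p.1, (g p.1)⁻¹ * p.2))
      (ν.prod μ) (ν.prod μ) :=
    (MeasurePreserving.id ν).skew_product (by fun_prop)
      (.of_forall fun a => map_mul_left_eq_self μ (g a)⁻¹)
  exact hshear.integrable_comp_of_integrable (hf.mul_prod hw)

theorem integrable_groupConv_integrand (hu : Integrable u μ) (hv : Integrable v μ) :
    Integrable (fun p : G × G => u p.1 * v (p.1⁻¹ * p.2)) (μ.prod μ) :=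
  integrable_prod_mul_inv_mul (g := id) hu measurable_id hv

theorem ae_integrable_groupConv_integrand (hu : Integrable u μ) (hv : Integrable v μ) :
    ∀ᵐ x ∂μ, Integrable (fun y => u y * v (y⁻¹ * x)) μ :=
  (integrable_groupConv_integrand hu hv).prod_left_ae

theorem integrable_groupConv (hu : Integrable u μ) (hv : Integrable v μ) :
    Integrable (groupConv μ u v) μ :=
  (integrable_groupConv_integrand hu hv).integral_prod_right

theorem groupConv_sub_groupConv_ae_eq (hu : Integrable u μ) (hv : Integrable v μ)
    (hw : Integrable w μ) :
    groupConv μ u v - groupConv μ u w =ᵐ[μ] groupConv μ u (v - w) := by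
  filter_upwards [ae_integrable_groupConv_integrand hu hv,
    ae_integrable_groupConv_integrand hu hw] with x hv' hw'
  simp only [Pi.sub_apply, groupConv, mul_sub]
  exact (integral_sub hv' hw').symm

theorem groupConv_assoc_ae_eq (hu : Integrable u μ) (hv : Integrable v μ) (hw : Integrable w μ) :
    groupConv μ (groupConv μ u v) w =ᵐ[μ] groupConv μ u (groupConv μ v w) := by
  have htriple := (integrable_prod_mul_inv_mul (integrable_groupConv_integrand hu hv)
    measurable_snd hw).prod_left_ae
  filter_upwards [htriple] with x hx
  calc groupConv μ (groupConv μ u v) w x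
      = ∫ t, ∫ y, u y * v (y⁻¹ * t) * w (t⁻¹ * x) ∂μ ∂μ := by
        simp only [groupConv, ← integral_mul_const]
    _ = ∫ y, ∫ t, u y * v (y⁻¹ * t) * w (t⁻¹ * x) ∂μ ∂μ := (integral_integral_swap hx).symm
    _ = ∫ y, u y * ∫ s, v s * w (s⁻¹ * (y⁻¹ * x)) ∂μ ∂μ := by
        congr 1 with y
        rw [← integral_const_mul,
          ← integral_mul_left_eq_self (fun t => u y * v (y⁻¹ * t) * w (t⁻¹ * x)) y]
        simp only [inv_mul_cancel_left, mul_inv_rev, mul_assoc]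
    _ = groupConv μ u (groupConv μ v w) x := rfl

theorem setLIntegral_enorm_groupConv_le (hu : AEStronglyMeasurable u μ)
    (hv : AEStronglyMeasurable v μ) {A Z : Set G} (hAZ : ∀ y ∈ support u, ∀ x ∈ A, y⁻¹ * x ∈ Z) :
    ∫⁻ x in A, ‖groupConv μ u v x‖ₑ ∂μ ≤ (∫⁻ y, ‖u y‖ₑ ∂μ) * ∫⁻ z in Z, ‖v z‖ₑ ∂μ := by
  have hF : AEStronglyMeasurable (uncurry fun y x => u y * v (y⁻¹ * x))
      (μ.prod (μ.restrict A)) :=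
    (hu.comp_fst.mul (hv.comp_quasiMeasurePreserving (quasiMeasurePreserving_inv_mul μ μ))).mono_ac
      (Measure.AbsolutelyContinuous.rfl.prod
        (Measure.absolutelyContinuous_of_le Measure.restrict_le_self))
  calc ∫⁻ x in A, ‖groupConv μ u v x‖ₑ ∂μ ≤ ∫⁻ y, ∫⁻ x in A, ‖u y * v (y⁻¹ * x)‖ₑ ∂μ ∂μ :=
        lintegral_enorm_integral_le hF
    _ = ∫⁻ y, ‖u y‖ₑ * ∫⁻ x in A, ‖v (y⁻¹ * x)‖ₑ ∂μ ∂μ := by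
        simp_rw [enorm_mul]
        congr 1 with y
        exact lintegral_const_mul' _ _ enorm_ne_top
    _ ≤ _ := lintegral_enorm_mul_le_of_support_subset hu subset_rfl
        fun y hy => setLIntegral_comp_inv_mul_le _ (hAZ y hy)

theorem sub_groupConv_ae_eq_integral {φ : G → ℂ} (hφ : Integrable φ μ) (hφ1 : ∫ t, φ t ∂μ = 1)
    (hv : Integrable v μ) :
    ∀ᵐ z ∂μ, v z - groupConv μ φ v z = ∫ t, φ t * (v z - v (t⁻¹ * z)) ∂μ := by
  filter_upwards [ae_integrable_groupConv_integrand hφ hv] with z hz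
  simp only [mul_sub]
  rw [integral_sub (hφ.mul_const _) hz, integral_mul_const, hφ1, one_mul, groupConv]

theorem setLIntegral_enorm_sub_groupConv_le {φ : G → ℂ} (hφ : Integrable φ μ)
    (hφ1 : ∫ t, φ t ∂μ = 1) (hv : Integrable v μ) (Z : Set G) :
    ∫⁻ z in Z, ‖v z - groupConv μ φ v z‖ₑ ∂μ ≤
      ∫⁻ t, ‖φ t‖ₑ * ∫⁻ z in Z, ‖v (t⁻¹ * z) - v z‖ₑ ∂μ ∂μ := by
  have hF : AEStronglyMeasurable (uncurry fun t z => φ t * (v z - v (t⁻¹ * z)))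
      (μ.prod (μ.restrict Z)) :=
    (hφ.1.comp_fst.mul (hv.1.comp_snd.sub
      (hv.1.comp_quasiMeasurePreserving (quasiMeasurePreserving_inv_mul μ μ)))).mono_ac
      (Measure.AbsolutelyContinuous.rfl.prod
        (Measure.absolutelyContinuous_of_le Measure.restrict_le_self))
  calc ∫⁻ z in Z, ‖v z - groupConv μ φ v z‖ₑ ∂μ
      = ∫⁻ z in Z, ‖∫ t, φ t * (v z - v (t⁻¹ * z)) ∂μ‖ₑ ∂μ := by
        refine lintegral_congr_ae (ae_restrict_of_ae ?_)
        filter_upwards [sub_groupConv_ae_eq_integral hφ hφ1 hv] with z hz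
        rw [hz]
    _ ≤ ∫⁻ t, ∫⁻ z in Z, ‖φ t * (v z - v (t⁻¹ * z))‖ₑ ∂μ ∂μ := lintegral_enorm_integral_le hF
    _ = _ := by
        congr 1 with t
        rw [← lintegral_const_mul' _ _ enorm_ne_top]
        congr 1 with z
        rw [enorm_mul, enorm_sub_rev]

theorem groupConv_sub_groupConv_groupConv_ae_eq (hu : Integrable u μ) (hv : Integrable v μ)
    (hw : Integrable w μ) :
    groupConv μ u w - groupConv μ (groupConv μ u v) w =ᵐ[μ]
      groupConv μ u (w - groupConv μ v w) := by
  filter_upwards [groupConv_assoc_ae_eq hu hv hw,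
    groupConv_sub_groupConv_ae_eq hu hw (integrable_groupConv hv hw)] with x hassoc hsub
  rw [Pi.sub_apply, hassoc, ← hsub, Pi.sub_apply]

theorem setLIntegral_enorm_groupConv_sub_groupConv_groupConv_le (hu : Integrable u μ)
    (hv : Integrable v μ) {φ : G → ℂ} (hφ : Integrable φ μ) (hφ1 : ∫ t, φ t ∂μ = 1)
    {s A Z : Set G} (hφs : support φ ⊆ s) (hAZ : ∀ y ∈ support u, ∀ x ∈ A, y⁻¹ * x ∈ Z) :
    ∫⁻ x in A, ‖groupConv μ u v x - groupConv μ (groupConv μ u φ) v x‖ₑ ∂μ ≤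
      (∫⁻ y, ‖u y‖ₑ ∂μ) *
        ((∫⁻ t, ‖φ t‖ₑ ∂μ) * ⨆ t ∈ s, ∫⁻ z in Z, ‖v (t⁻¹ * z) - v z‖ₑ ∂μ) :=
  calc ∫⁻ x in A, ‖groupConv μ u v x - groupConv μ (groupConv μ u φ) v x‖ₑ ∂μ
      = ∫⁻ x in A, ‖groupConv μ u (v - groupConv μ φ v) x‖ₑ ∂μ :=
        lintegral_congr_ae <| ae_restrict_of_ae <|
          (groupConv_sub_groupConv_groupConv_ae_eq hu hφ hv).mono fun _ hx => congrArg enorm hx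
    _ ≤ (∫⁻ y, ‖u y‖ₑ ∂μ) * ∫⁻ z in Z, ‖v z - groupConv μ φ v z‖ₑ ∂μ :=
        setLIntegral_enorm_groupConv_le hu.1 (hv.sub (integrable_groupConv hφ hv)).1 hAZ
    _ ≤ _ := by
        gcongr
        exact (setLIntegral_enorm_sub_groupConv_le hφ hφ1 hv Z).trans
          (lintegral_enorm_mul_le_of_support_subset hφ.1 hφs fun t ht =>
            le_biSup (fun t => ∫⁻ z in Z, ‖v (t⁻¹ * z) - v z‖ₑ ∂μ) ht)

end Group

theorem bad_part_mollification_estimate_general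
    {G : Type*} [Group G] [MetricSpace G] [MeasurableSpace G] [BorelSpace G]
    [MeasurableMul₂ G] [MeasurableInv G]
    (μ : Measure G) [SigmaFinite μ] [μ.IsMulLeftInvariant]
    (hd : ∀ a x y : G, dist (a * x) (a * y) = dist x y)
    (K : G → ℂ) (hK : Integrable K μ)
    (x₀ : G) (r : ℝ)
    (b : G → ℂ) (hb : Integrable b μ)
    (hbsupp : Function.support b ⊆ {y : G | dist y x₀ ≤ r})
    (R : ℝ)
    (hB0 : 0 < μ (Metric.ball (1 : G) R)) (hBfin : μ (Metric.ball (1 : G) R) < ⊤)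
    (φ : G → ℂ)
    (hφ : φ = Set.indicator (Metric.ball (1 : G) R)
        (fun _ => (((μ (Metric.ball (1 : G) R)).toReal)⁻¹ : ℂ))) :
    ∫⁻ x in {x : G | 3 * r ≤ dist x x₀},
        (‖groupConv μ b K x - groupConv μ (groupConv μ b φ) K x‖₊ : ℝ≥0∞) ∂μ ≤
      (∫⁻ y, (‖b y‖₊ : ℝ≥0∞) ∂μ) *
        ⨆ y ∈ {y : G | dist y 1 ≤ R},
          ∫⁻ z in {z : G | 2 * r ≤ dist z 1}, (‖K (y⁻¹ * z) - K z‖₊ : ℝ≥0∞) ∂μ := by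
  have hBm : MeasurableSet (Metric.ball (1 : G) R) := measurableSet_ball
  have hφint : Integrable φ μ :=
    hφ ▸ (integrable_indicator_iff hBm).2 (integrableOn_const hBfin.ne)
  have hφ1 : ∫ t, φ t ∂μ = 1 := hφ ▸ integral_indicator_inv_measureReal hBm hB0.ne' hBfin.ne
  have hφnorm : ∫⁻ t, ‖φ t‖ₑ ∂μ = 1 :=
    hφ ▸ lintegral_enorm_indicator_inv_measureReal hBm hB0.ne' hBfin.ne
  have hφsupp : support φ ⊆ {y : G | dist y 1 ≤ R} :=
    hφ ▸ Set.support_indicator_subset.trans Metric.ball_subset_closedBall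
  have hAZ : ∀ y ∈ support b, ∀ x ∈ {x : G | 3 * r ≤ dist x x₀},
      y⁻¹ * x ∈ {z : G | 2 * r ≤ dist z 1} := fun y hy x hx => by
    have hyx₀ : dist y x₀ ≤ r := hbsupp hy
    have hxx₀ : 3 * r ≤ dist x x₀ := hx
    show 2 * r ≤ dist (y⁻¹ * x) 1
    linarith [dist_sub_dist_le_dist_inv_mul_one hd x y x₀]
  have key := setLIntegral_enorm_groupConv_sub_groupConv_groupConv_le hb hK hφint hφ1 hφsupp hAZ
  rwa [hφnorm, one_mul] at key

/-- **Mollification error estimate for the bad part.** If `b` is supported in the closed ball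
of radius `r` about `x₀`, `R = r^(1/(1-θ))` and `φ` is the normalized indicator of `B(e,R)`,
then `∫_{d(x,x₀) ≥ 3r} |(b ⋆ K)(x) - (b ⋆ φ ⋆ K)(x)| dμ(x)` is bounded by
`‖b‖_{L¹} · sup_{|y| ≤ R} ∫_{|z| ≥ 2r} |K(y⁻¹z) - K(z)| dμ(z)`. -/
theorem bad_part_mollification_estimate
    {G : Type*} [Group G] [MetricSpace G] [MeasurableSpace G] [BorelSpace G]
    [MeasurableMul₂ G] [MeasurableInv G]
    (μ : Measure G) [SigmaFinite μ] [μ.IsMulLeftInvariant]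
    (hd : ∀ a x y : G, dist (a * x) (a * y) = dist x y)
    (θ : ℝ) (hθ0 : 0 ≤ θ) (hθ1 : θ < 1)
    (K : G → ℂ) (hK : Integrable K μ)
    (x₀ : G) (r : ℝ) (hr : 0 < r)
    (b : G → ℂ) (hb : Integrable b μ)
    (hbsupp : Function.support b ⊆ {y : G | dist y x₀ ≤ r})
    (R : ℝ) (hRr : R = r ^ ((1 : ℝ) / (1 - θ)))
    (hB0 : 0 < μ (Metric.ball (1 : G) R)) (hBfin : μ (Metric.ball (1 : G) R) < ⊤)
    (φ : G → ℂ)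
    (hφ : φ = Set.indicator (Metric.ball (1 : G) R)
        (fun _ => (((μ (Metric.ball (1 : G) R)).toReal)⁻¹ : ℂ))) :
    ∫⁻ x in {x : G | 3 * r ≤ dist x x₀},
        (‖groupConv μ b K x - groupConv μ (groupConv μ b φ) K x‖₊ : ℝ≥0∞) ∂μ ≤
      (∫⁻ y, (‖b y‖₊ : ℝ≥0∞) ∂μ) *
        ⨆ y ∈ {y : G | dist y 1 ≤ R},
          ∫⁻ z in {z : G | 2 * r ≤ dist z 1}, (‖K (y⁻¹ * z) - K z‖₊ : ℝ≥0∞) ∂μ :=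
  bad_part_mollification_estimate_general μ hd K hK x₀ r b hb hbsupp R hB0 hBfin φ hφ
end

section
/- Let n ≥ 1, 0 < θ < 1, C ≥ 0, and let K : ℝⁿ → ℂ be differentiable at every x ≠ 0 with ‖DK(x)‖ ≤ C ‖x‖^{-n-1-θ/(1-θ)} for all x ≠ 0. Then there exists a constant A > 0, depending only on n and θ, such that for every R with 0 < R ≤ 1 and every y ∈ ℝⁿ with ‖y‖ ≤ R one has ∫_{{x : ‖x‖ ≥ 2R^{1-θ}}} |K(x - y) - K(x)| dx ≤ A C. -/
/-!
On `‖x‖ ≥ r := 2 R^(1-θ)` the whole ball `closedBall x (‖x‖/2)`, which contains `x - y`, stays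
away from the origin, so the mean value theorem bounds `‖K (x - y) - K x‖` by
`2^p C ‖y‖ ‖x‖^(-p)` with `p = n + 1/(1-θ)`. In polar coordinates
`∫_{‖x‖ ≥ r} ‖x‖^(-p) = n |B₁| r^(n-p) / (p - n)`, and `r^(n-p) = 2^(-1/(1-θ)) / R` exactly
cancels the factor `‖y‖ ≤ R`.
-/

open MeasureTheory Metric Set Module
open scoped ENNReal

theorem norm_sub_le_of_norm_fderiv_le_rpow {E F : Type*} [NormedAddCommGroup E]
    [NormedSpace ℝ E] [NormedAddCommGroup F] [NormedSpace ℝ F] {f : E → F} {C p : ℝ} (hC : 0 ≤ C)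
    (hp : 0 ≤ p)
    (hf : ∀ x ≠ 0, DifferentiableAt ℝ f x) (hf' : ∀ x ≠ 0, ‖fderiv ℝ f x‖ ≤ C * ‖x‖ ^ (-p))
    {x y : E} (hx : x ≠ 0) (hy : 2 * ‖y‖ ≤ ‖x‖) :
    ‖f (x - y) - f x‖ ≤ 2 ^ p * C * ‖y‖ * ‖x‖ ^ (-p) := by
  have hx0 : 0 < ‖x‖ := norm_pos_iff.2 hx
  have hball : ∀ z ∈ closedBall x (‖x‖ / 2), ‖x‖ / 2 ≤ ‖z‖ := fun z hz ↦ by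
    have := norm_sub_norm_le x z
    rw [← dist_eq_norm, dist_comm] at this
    linarith [mem_closedBall.1 hz]
  have hne : ∀ z ∈ closedBall x (‖x‖ / 2), z ≠ 0 := fun z hz ↦
    norm_pos_iff.1 ((half_pos hx0).trans_le (hball z hz))
  have hbound : ∀ z ∈ closedBall x (‖x‖ / 2), ‖fderiv ℝ f z‖ ≤ 2 ^ p * C * ‖x‖ ^ (-p) :=
    fun z hz ↦ calc
      ‖fderiv ℝ f z‖ ≤ C * ‖z‖ ^ (-p) := hf' z (hne z hz)
      _ ≤ C * (‖x‖ / 2) ^ (-p) := mul_le_mul_of_nonneg_left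
        (Real.rpow_le_rpow_of_nonpos (half_pos hx0) (hball z hz) (neg_nonpos.2 hp)) hC
      _ = 2 ^ p * C * ‖x‖ ^ (-p) := by
        rw [Real.div_rpow hx0.le zero_le_two, Real.rpow_neg zero_le_two, div_inv_eq_mul]; ring
  have hxy : x - y ∈ closedBall x (‖x‖ / 2) := by
    rw [mem_closedBall, dist_eq_norm, sub_sub_cancel_left, norm_neg]; linarith
  calc ‖f (x - y) - f x‖ ≤ 2 ^ p * C * ‖x‖ ^ (-p) * ‖x - y - x‖ :=
        (convex_closedBall x _).norm_image_sub_le_of_norm_fderiv_le (fun z hz ↦ hf z (hne z hz))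
          hbound (mem_closedBall_self (half_pos hx0).le) hxy
    _ = 2 ^ p * C * ‖y‖ * ‖x‖ ^ (-p) := by rw [sub_sub_cancel_left, norm_neg]; ring

theorem eqOn_pow_smul_indicator_rpow {d : ℕ} (hd : 1 ≤ d) (p r : ℝ) :
    EqOn (fun t : ℝ ↦ t ^ (d - 1) • (Ici r).indicator (· ^ (-p)) t)
      ((Ici r).indicator (· ^ ((d : ℝ) - 1 - p))) (Ioi 0) := by
  intro t (ht : 0 < t)
  by_cases htr : r ≤ t
  · simp only [indicator_of_mem (mem_Ici.2 htr), smul_eq_mul]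
    rw [← Real.rpow_natCast, ← Real.rpow_add ht, Nat.cast_sub hd, Nat.cast_one, sub_eq_add_neg _ p]
  · simp [indicator_of_notMem (mt mem_Ici.1 htr)]

section
variable {E : Type*} [NormedAddCommGroup E] [NormedSpace ℝ E] [FiniteDimensional ℝ E]
  [MeasurableSpace E] [BorelSpace E] (μ : Measure E) [μ.IsAddHaarMeasure]

theorem integrable_indicator_Ici_rpow_neg_norm [Nontrivial E] {p r : ℝ} (hr : 0 < r)
    (hp : finrank ℝ E < p) : Integrable (fun x : E ↦ (Ici r).indicator (· ^ (-p)) ‖x‖) μ := by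
  have hexp : (finrank ℝ E : ℝ) - 1 - p < -1 := by linarith
  have hIci : IntegrableOn (· ^ ((finrank ℝ E : ℝ) - 1 - p)) (Ici r) :=
    (integrableOn_Ici_iff_integrableOn_Ioi enorm_ne_top).2 (integrableOn_Ioi_rpow_of_lt hexp hr)
  rw [integrable_fun_norm_addHaar μ,
    integrableOn_congr_fun (eqOn_pow_smul_indicator_rpow finrank_pos p r) measurableSet_Ioi]
  exact (hIci.integrable_indicator measurableSet_Ici).integrableOn

theorem integral_indicator_Ici_rpow_neg_norm [Nontrivial E] {p r : ℝ} (hr : 0 < r)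
    (hp : finrank ℝ E < p) :
    ∫ x, (Ici r).indicator (· ^ (-p)) ‖x‖ ∂μ
      = finrank ℝ E * μ.real (ball 0 1) * r ^ ((finrank ℝ E : ℝ) - p) / (p - finrank ℝ E) := by
  have hexp : (finrank ℝ E : ℝ) - 1 - p < -1 := by linarith
  rw [integral_fun_norm_addHaar,
    setIntegral_congr_fun measurableSet_Ioi (eqOn_pow_smul_indicator_rpow finrank_pos p r),
    setIntegral_indicator measurableSet_Ici, inter_eq_right.2 (Ici_subset_Ioi.2 hr),
    integral_Ici_eq_integral_Ioi, integral_Ioi_rpow_of_lt hexp hr, nsmul_eq_mul, smul_eq_mul,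
    sub_right_comm _ (1 : ℝ), sub_add_cancel, neg_div, ← div_neg, neg_sub]
  ring

theorem lintegral_norm_rpow_neg_setOf_le {p r : ℝ} (hr : 0 < r) (hp : finrank ℝ E < p) :
    ∫⁻ x in {x : E | r ≤ ‖x‖}, ENNReal.ofReal (‖x‖ ^ (-p)) ∂μ
      = ENNReal.ofReal (finrank ℝ E * μ.real (ball 0 1) * r ^ ((finrank ℝ E : ℝ) - p)
          / (p - finrank ℝ E)) := by
  rcases subsingleton_or_nontrivial E with hE | hE
  · have : {x : E | r ≤ ‖x‖} = ∅ := by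
      ext x; simp [Subsingleton.elim x 0, not_le.2 hr]
    simp [this, finrank_zero_of_subsingleton]
  rw [← integral_indicator_Ici_rpow_neg_norm μ hr hp, ofReal_integral_eq_lintegral_ofReal
      (integrable_indicator_Ici_rpow_neg_norm μ hr hp)
      (.of_forall fun x ↦ indicator_nonneg (fun t ht ↦ Real.rpow_nonneg (hr.le.trans ht) _) _),
    ← lintegral_indicator (measurableSet_le measurable_const measurable_norm)]
  congr 1 with x
  by_cases hx : r ≤ ‖x‖ <;> simp [hx]

theorem lintegral_enorm_sub_le_of_norm_fderiv_le_rpow {F : Type*} [NormedAddCommGroup F]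
    [NormedSpace ℝ F] {f : E → F} {C p r : ℝ} (hC : 0 ≤ C)
    (hp : finrank ℝ E < p) (hf : ∀ x ≠ 0, DifferentiableAt ℝ f x)
    (hf' : ∀ x ≠ 0, ‖fderiv ℝ f x‖ ≤ C * ‖x‖ ^ (-p)) {y : E} (hr : 0 < r) (hyr : 2 * ‖y‖ ≤ r) :
    ∫⁻ x in {x : E | r ≤ ‖x‖}, ‖f (x - y) - f x‖ₑ ∂μ
      ≤ ENNReal.ofReal (2 ^ p * C * ‖y‖ * (finrank ℝ E * μ.real (ball 0 1)
          * r ^ ((finrank ℝ E : ℝ) - p) / (p - finrank ℝ E))) := by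
  have hp0 : 0 ≤ p := (Nat.cast_nonneg _).trans hp.le
  calc ∫⁻ x in {x : E | r ≤ ‖x‖}, ‖f (x - y) - f x‖ₑ ∂μ
      ≤ ∫⁻ x in {x : E | r ≤ ‖x‖},
          ENNReal.ofReal (2 ^ p * C * ‖y‖) * ENNReal.ofReal (‖x‖ ^ (-p)) ∂μ := by
        refine setLIntegral_mono' (measurableSet_le measurable_const measurable_norm) fun x hx ↦ ?_
        have hx0 : x ≠ 0 := norm_pos_iff.1 (hr.trans_le hx)
        rw [← ENNReal.ofReal_mul (by positivity), ← ofReal_norm]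
        exact ENNReal.ofReal_le_ofReal
          (norm_sub_le_of_norm_fderiv_le_rpow hC hp0 hf hf' hx0 (hyr.trans hx))
    _ = _ := by
        rw [lintegral_const_mul _ (by fun_prop), lintegral_norm_rpow_neg_setOf_le μ hr hp,
          ← ENNReal.ofReal_mul (by positivity)]

end

/-- **The gradient estimate implies the oscillating Hörmander condition.** If `K : ℝⁿ → ℂ`
is differentiable away from the origin with `‖DK(x)‖ ≤ C ‖x‖^(-n-1-θ/(1-θ))`, then there is
a constant `A > 0` depending only on `n` and `θ` such that for all `0 < R ≤ 1` and `‖y‖ ≤ R`,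
`∫_{‖x‖ ≥ 2R^(1-θ)} |K(x-y) - K(x)| dx ≤ A C`. -/
theorem gradient_bound_implies_oscillating_hormander
    (n : ℕ) (hn : 1 ≤ n) (θ : ℝ) (hθ0 : 0 < θ) (hθ1 : θ < 1) :
    ∃ A : ℝ, 0 < A ∧
      ∀ C : ℝ, 0 ≤ C →
        ∀ K : EuclideanSpace ℝ (Fin n) → ℂ,
          (∀ x : EuclideanSpace ℝ (Fin n), x ≠ 0 → DifferentiableAt ℝ K x) →
          (∀ x : EuclideanSpace ℝ (Fin n), x ≠ 0 →
            ‖fderiv ℝ K x‖ ≤ C * ‖x‖ ^ (-(n : ℝ) - 1 - θ / (1 - θ))) →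
          ∀ R : ℝ, 0 < R → R ≤ 1 →
            ∀ y : EuclideanSpace ℝ (Fin n), ‖y‖ ≤ R →
              ∫⁻ x in {x : EuclideanSpace ℝ (Fin n) | 2 * R ^ (1 - θ) ≤ ‖x‖},
                  (‖K (x - y) - K x‖₊ : ℝ≥0∞) ≤ ENNReal.ofReal (A * C) := by
  set v := volume.real (ball (0 : EuclideanSpace ℝ (Fin n)) 1)
  have hv : 0 < v := ENNReal.toReal_pos (measure_ball_pos _ _ one_pos).ne' measure_ball_lt_top.ne
  have h1θ : 0 < 1 - θ := sub_pos.2 hθ1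
  refine ⟨2 ^ (n : ℝ) * n * v * (1 - θ), by positivity, fun C hC K hK hK' R hR0 hR1 y hy ↦ ?_⟩
  set q := 1 / (1 - θ) with hq
  have hexp : -(n : ℝ) - 1 - θ / (1 - θ) = -(n + q) := by rw [hq]; field_simp; ring
  have hscale : 2 ^ ((n : ℝ) + q) * R * (2 * R ^ (1 - θ)) ^ (-q) = 2 ^ (n : ℝ) := by
    rw [Real.mul_rpow zero_le_two (by positivity), ← Real.rpow_mul hR0.le,
      show (1 - θ) * -q = -1 by rw [hq]; field_simp, Real.rpow_neg_one, Real.rpow_neg zero_le_two,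
      Real.rpow_add two_pos]
    field_simp
  have key := lintegral_enorm_sub_le_of_norm_fderiv_le_rpow volume (f := K) hC
    (by rw [finrank_euclideanSpace_fin]; linarith [one_div_pos.2 h1θ]) hK
    (fun x hx ↦ hexp ▸ hK' x hx) (by positivity : 0 < 2 * R ^ (1 - θ))
    (by linarith [Real.self_le_rpow_of_le_one hR0.le hR1 (by linarith : 1 - θ ≤ 1)])
  rw [finrank_euclideanSpace_fin, add_sub_cancel_left, sub_add_cancel_left] at key
  refine key.trans (ENNReal.ofReal_le_ofReal ?_)
  calc 2 ^ ((n : ℝ) + q) * C * ‖y‖ * (n * v * (2 * R ^ (1 - θ)) ^ (-q) / q)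
      ≤ 2 ^ ((n : ℝ) + q) * C * R * (n * v * (2 * R ^ (1 - θ)) ^ (-q) / q) := by gcongr
    _ = 2 ^ ((n : ℝ) + q) * R * (2 * R ^ (1 - θ)) ^ (-q) * n * v * (1 - θ) * C := by
        rw [hq]; field_simp
    _ = _ := by rw [hscale]
end

section
/- Let (X, μ) be a measure space, let ι be a countable index set, let g : ι → X → ℂ be a family of measurable functions, and let N ∈ ℕ be such that for μ-almost every x ∈ X the set {i ∈ ι : g i x ≠ 0} has at most N elements. Then ∫ (∑_{i ∈ ι} |g i x|)² dμ(x) ≤ N · ∑_{i ∈ ι} ∫ |g i x|² dμ(x), where the integrals and sums take values in [0, ∞]. -/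
open MeasureTheory Finset
open scoped ENNReal

/-!
At each point where at most `N` of the `g i x` are nonzero, Cauchy–Schwarz on those terms gives
`(∑ |g i x|)² ≤ N ∑ |g i x|²`. Integrate, and exchange the sum with the integral by monotone
convergence.
-/

theorem ENNReal.sq_sum_le_card_mul_sum_sq {ι : Type*} (s : Finset ι) (f : ι → ℝ≥0∞) :
    (∑ i ∈ s, f i) ^ 2 ≤ #s * ∑ i ∈ s, f i ^ 2 := by
  simpa [ENNReal.rpow_two, show (2 : ℝ) - 1 = 1 by norm_num] using
    ENNReal.rpow_sum_le_const_mul_sum_rpow (s := s) (f := f) one_le_two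

theorem ENNReal.sq_tsum_le_mul_tsum_sq {ι : Type*} {f : ι → ℝ≥0∞} {N : ℕ}
    (hf : (Function.support f).encard ≤ N) :
    (∑' i, f i) ^ 2 ≤ N * ∑' i, f i ^ 2 := by
  have hfin : (Function.support f).Finite := Set.finite_of_encard_le_coe hf
  have hcard : #hfin.toFinset ≤ N := by
    rwa [hfin.encard_eq_coe_toFinset_card, Nat.cast_le] at hf
  rw [tsum_eq_sum' (s := hfin.toFinset) (by simp),
    tsum_eq_sum' (s := hfin.toFinset) (by simp)]
  grw [ENNReal.sq_sum_le_card_mul_sum_sq, hcard]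

theorem MeasureTheory.lintegral_sq_tsum_le_of_encard_support_le {X ι : Type*}
    [MeasurableSpace X] [Countable ι] {μ : Measure X} {f : ι → X → ℝ≥0∞}
    (hf : ∀ i, AEMeasurable (f i) μ) {N : ℕ}
    (hN : ∀ᵐ x ∂μ, (Function.support fun i ↦ f i x).encard ≤ N) :
    ∫⁻ x, (∑' i, f i x) ^ 2 ∂μ ≤ N * ∑' i, ∫⁻ x, f i x ^ 2 ∂μ :=
  calc ∫⁻ x, (∑' i, f i x) ^ 2 ∂μ
      ≤ ∫⁻ x, N * ∑' i, f i x ^ 2 ∂μ :=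
        lintegral_mono_ae (hN.mono fun _ ↦ ENNReal.sq_tsum_le_mul_tsum_sq)
    _ = N * ∑' i, ∫⁻ x, f i x ^ 2 ∂μ := by
        rw [lintegral_const_mul' _ _ (ENNReal.natCast_ne_top N),
          lintegral_tsum fun i ↦ (hf i).pow_const 2]

/-- **Almost-orthogonality from bounded overlap.** If at almost every point at most `N` of the
functions `g i` are nonzero, then `∫ (∑_i |g i|)² dμ ≤ N ∑_i ∫ |g i|² dμ`. -/
theorem lintegral_sq_tsum_le_of_bounded_overlap
    {X : Type*} [MeasurableSpace X] (μ : Measure X)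
    {ι : Type*} [Countable ι] (g : ι → X → ℂ) (hg : ∀ i, Measurable (g i))
    (N : ℕ) (hN : ∀ᵐ x ∂μ, Set.encard {i : ι | g i x ≠ 0} ≤ (N : ℕ∞)) :
    ∫⁻ x, (∑' i : ι, (‖g i x‖₊ : ℝ≥0∞)) ^ 2 ∂μ ≤
      (N : ℝ≥0∞) * ∑' i : ι, ∫⁻ x, (‖g i x‖₊ : ℝ≥0∞) ^ 2 ∂μ :=
  lintegral_sq_tsum_le_of_encard_support_le
    (fun i ↦ (hg i).nnnorm.coe_nnreal_ennreal.aemeasurable) (by simpa [Function.support] using hN)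
end

section
/- Let G be a group equipped with a left-invariant Borel measure μ and a left-invariant metric d, with measurable group operations; write |x| := d(x, e). Let (x_j)_{j ∈ J} be a countable family of points of G, (r_j), (R_j) families of positive reals with 0 < μ(B(e,R_j)) < ∞ for each j, set I_j := B(x_j, r_j) and φ_j := μ(B(e,R_j))^{-1} 1_{B(e,R_j)}, and suppose there is M ∈ ℕ such that every point of G belongs to at most M of the balls B(x_j, r_j + R_j). Then for every x ∈ G, ∑_{j ∈ J} (1_{I_j} ⋆ φ_j)(x) ≤ M. -/
open MeasureTheory
open scoped ENNReal

open Metric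

/-!
The integrand of `(1_{B(x_j, r_j)} ⋆ φ_j)(x)` is `μ(B(e, R_j))⁻¹` times the indicator of
`B(x_j, r_j) ∩ B(x, R_j)`, because left invariance of `d` gives `d(y⁻¹ x, e) = d(x, y)`. So each term
is `μ(B(x_j, r_j) ∩ B(x, R_j)) / μ(B(x, R_j)) ≤ 1` (left invariance of `μ` gives
`μ(B(x, R_j)) = μ(B(e, R_j))`), and it vanishes unless the two balls meet, which
forces `x ∈ B(x_j, r_j + R_j)`. Hence the sum is at most the number of such `j`, i.e. at most `M`.
-/

namespace ENNReal

theorem toReal_div_toReal_le_one {a b : ℝ≥0∞} (hab : a ≤ b) : a.toReal / b.toReal ≤ 1 := by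
  rcases eq_or_ne b ⊤ with rfl | hb
  · simp
  · exact div_le_one_of_le₀ (toReal_mono hb hab) toReal_nonneg

theorem tsum_indicator_one_eq_encard {J : Type*} (s : Set J) :
    ∑' j, s.indicator (1 : J → ℝ≥0∞) j = s.encard := by
  rw [← tsum_subtype, ← tsum_set_one]
  rfl

end ENNReal

section LeftInvariantMetric

variable {G : Type*} [Group G] [PseudoMetricSpace G] [IsIsometricSMul G G]

theorem inv_mul_mem_ball_one_iff {x y : G} {R : ℝ} : y⁻¹ * x ∈ ball (1 : G) R ↔ y ∈ ball x R := by
  rw [mem_ball, mem_ball, dist_comm y, ← dist_smul y⁻¹ x y, smul_eq_mul, smul_eq_mul,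
    inv_mul_cancel]

theorem measure_ball_eq_measure_ball_one [MeasurableSpace G] (μ : Measure G)
    [μ.IsMulLeftInvariant] (x : G) (R : ℝ) : μ (ball x R) = μ (ball 1 R) := by
  rw [← mul_one x, ← smul_eq_mul, ← Metric.smul_ball, measure_smul]

theorem indicator_ball_one_inv_mul {β : Type*} [Zero β] (x y : G) (R : ℝ) (c : β) :
    (ball (1 : G) R).indicator (fun _ => c) (y⁻¹ * x) = (ball x R).indicator (fun _ => c) y := by
  by_cases hy : y ∈ ball x R
  · rw [Set.indicator_of_mem hy, Set.indicator_of_mem (inv_mul_mem_ball_one_iff.2 hy)]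
  · rw [Set.indicator_of_notMem hy, Set.indicator_of_notMem (mt inv_mul_mem_ball_one_iff.1 hy)]

variable [MeasurableSpace G] [OpensMeasurableSpace G] (μ : Measure G)

theorem integral_indicator_mul_indicator_ball_inv_mul {I : Set G} (hI : MeasurableSet I)
    (x : G) (R c : ℝ) :
    ∫ y, I.indicator (fun _ => (1 : ℝ)) y * (ball (1 : G) R).indicator (fun _ => c) (y⁻¹ * x) ∂μ =
      (μ (I ∩ ball x R)).toReal * c := by
  have hintegrand : ∀ y, I.indicator (fun _ => (1 : ℝ)) y *
      (ball (1 : G) R).indicator (fun _ => c) (y⁻¹ * x) = (I ∩ ball x R).indicator (fun _ => c) y := by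
    intro y
    rw [indicator_ball_one_inv_mul, ← Set.indicator_mul_left]
    simp only [one_mul, Set.indicator_indicator]
  simp_rw [hintegrand]
  exact integral_indicator_const c (hI.inter measurableSet_ball)

theorem ofReal_integral_indicator_ball_mul_normalized_indicator_le [μ.IsMulLeftInvariant]
    (x z : G) (r R : ℝ) :
    ENNReal.ofReal (∫ y, (ball z r).indicator (fun _ => (1 : ℝ)) y *
        (ball (1 : G) R).indicator (fun _ => (μ (ball (1 : G) R)).toReal⁻¹) (y⁻¹ * x) ∂μ) ≤
      (ball z (r + R)).indicator 1 x := by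
  rw [integral_indicator_mul_indicator_ball_inv_mul μ measurableSet_ball, ← div_eq_mul_inv]
  by_cases hx : x ∈ ball z (r + R)
  · rw [Set.indicator_of_mem hx, Pi.one_apply, ENNReal.ofReal_le_one,
      ← measure_ball_eq_measure_ball_one μ x]
    exact ENNReal.toReal_div_toReal_le_one (measure_mono Set.inter_subset_right)
  · have hdisjoint : ball z r ∩ ball x R = ∅ :=
      Set.not_nonempty_iff_eq_empty.1 fun hne =>
        hx (mem_ball.2 (dist_comm x z ▸ dist_lt_add_of_nonempty_ball_inter_ball hne))
    simp [Set.indicator_of_notMem hx, hdisjoint]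

end LeftInvariantMetric

theorem tsum_indicator_conv_le_of_bounded_overlap_general
    {G : Type*} [Group G] [MetricSpace G] [MeasurableSpace G] [BorelSpace G]
    (μ : Measure G) [μ.IsMulLeftInvariant]
    (hd : ∀ a x y : G, dist (a * x) (a * y) = dist x y)
    {J : Type*} (xc : J → G) (r R : J → ℝ)
    (M : ℕ)
    (hM : ∀ x : G, Set.encard {j : J | x ∈ Metric.ball (xc j) (r j + R j)} ≤ (M : ℕ∞)) :
    ∀ x : G,
      ∑' j : J, ENNReal.ofReal
          (∫ y, Set.indicator (Metric.ball (xc j) (r j)) (fun _ => (1 : ℝ)) y *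
            Set.indicator (Metric.ball (1 : G) (R j))
              (fun _ => ((μ (Metric.ball (1 : G) (R j))).toReal)⁻¹) (y⁻¹ * x) ∂μ) ≤
        (M : ℝ≥0∞) := by
  have : IsIsometricSMul G G := ⟨fun a => Isometry.of_dist_eq (hd a)⟩
  intro x
  calc _ ≤ ∑' j, (ball (xc j) (r j + R j)).indicator 1 x :=
        ENNReal.tsum_le_tsum fun j =>
          ofReal_integral_indicator_ball_mul_normalized_indicator_le μ x (xc j) (r j) (R j)
    _ = ({j | x ∈ ball (xc j) (r j + R j)}.encard : ℝ≥0∞) := by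
        rw [← ENNReal.tsum_indicator_one_eq_encard]
        rfl
    _ ≤ M := by exact_mod_cast hM x

/-- **Bounded overlap of mollified indicators.** If every point of `G` lies in at most `M` of
the balls `B(x_j, r_j + R_j)`, then the sum of the convolutions of the indicators `1_{I_j}`,
`I_j = B(x_j, r_j)`, with the normalized indicators `φ_j` of the balls `B(e, R_j)` is
pointwise bounded by `M`. -/
theorem tsum_indicator_conv_le_of_bounded_overlap
    {G : Type*} [Group G] [MetricSpace G] [MeasurableSpace G] [BorelSpace G]
    [MeasurableMul₂ G] [MeasurableInv G]
    (μ : Measure G) [μ.IsMulLeftInvariant]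
    (hd : ∀ a x y : G, dist (a * x) (a * y) = dist x y)
    {J : Type*} [Countable J] (xc : J → G) (r R : J → ℝ)
    (hr : ∀ j, 0 < r j) (hR : ∀ j, 0 < R j)
    (hB0 : ∀ j, 0 < μ (Metric.ball (1 : G) (R j)))
    (hBfin : ∀ j, μ (Metric.ball (1 : G) (R j)) < ⊤)
    (M : ℕ)
    (hM : ∀ x : G, Set.encard {j : J | x ∈ Metric.ball (xc j) (r j + R j)} ≤ (M : ℕ∞)) :
    ∀ x : G,
      ∑' j : J, ENNReal.ofReal
          (∫ y, Set.indicator (Metric.ball (xc j) (r j)) (fun _ => (1 : ℝ)) y *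
            Set.indicator (Metric.ball (1 : G) (R j))
              (fun _ => ((μ (Metric.ball (1 : G) (R j))).toReal)⁻¹) (y⁻¹ * x) ∂μ) ≤
        (M : ℝ≥0∞) :=
  tsum_indicator_conv_le_of_bounded_overlap_general μ hd xc r R M hM
end

section
/- Let G be a compact Lie group (a group carrying a compact smooth manifold structure for which multiplication and inversion are smooth). For every open neighborhood U of the identity e ∈ G there exist N ∈ ℕ, points x₁, …, x_N ∈ G, and smooth functions χ₁, …, χ_N : G → ℝ with 0 ≤ χ_k(x) ≤ 1 for all x, with the support of each χ_k contained in U, and such that ∑_{k=1}^{N} χ_k(x_k⁻¹ x) = 1 for every x ∈ G. -/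
open scoped Manifold ContDiff Pointwise

open Set

section CompactManifold

variable {ι : Type*} {E : Type*} [NormedAddCommGroup E] [NormedSpace ℝ E]
  {H : Type*} [TopologicalSpace H] {I : ModelWithCorners ℝ E H}
  {M : Type*} [TopologicalSpace M] [ChartedSpace H M] [CompactSpace M]

theorem SmoothPartitionOfUnity.exists_finset_sum_eq_one
    (f : SmoothPartitionOfUnity ι I M univ) : ∃ s : Finset ι, ∀ x, ∑ i ∈ s, f i x = 1 := by
  classical
  have hfin := f.locallyFinite.finite_nonempty_of_compact
  refine ⟨hfin.toFinset, fun x ↦ f.sum_finsupport' x (mem_univ x) fun i hi ↦ ?_⟩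
  rw [Finite.mem_toFinset]
  exact ⟨x, (f.mem_finsupport x).1 hi⟩

variable (I) [T2Space M] [FiniteDimensional ℝ E] [IsManifold I ∞ M]

theorem exists_fin_smoothPartitionOfUnity_of_compactSpace
    (U : ι → Set M) (hUo : ∀ i, IsOpen (U i)) (hU : ⋃ i, U i = univ) :
    ∃ (N : ℕ) (c : Fin N → ι) (ρ : Fin N → M → ℝ),
      (∀ k, ContMDiff I 𝓘(ℝ) ∞ (ρ k)) ∧ (∀ k x, ρ k x ∈ Icc (0 : ℝ) 1) ∧
      (∀ k, tsupport (ρ k) ⊆ U (c k)) ∧ ∀ x, ∑ k, ρ k x = 1 := by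
  obtain ⟨f, hfU⟩ := SmoothPartitionOfUnity.exists_isSubordinate I isClosed_univ U hUo hU.ge
  obtain ⟨s, hs⟩ := f.exists_finset_sum_eq_one
  let c : Fin s.card → ι := fun k ↦ s.equivFin.symm k
  refine ⟨s.card, c, fun k ↦ f (c k), fun k ↦ (f (c k)).contMDiff,
    fun k x ↦ ⟨f.nonneg _ x, f.le_one _ x⟩, fun k ↦ hfU (c k), fun x ↦ ?_⟩
  rw [← hs x, ← Finset.sum_attach s]
  exact Fintype.sum_equiv s.equivFin.symm _ _ fun _ ↦ rfl

end CompactManifold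

/-- **Smooth partition of unity adapted to translations on a compact Lie group.** For every
open neighborhood `U` of the identity of a compact Lie group `G` there are finitely many
points `x 1, …, x N` and smooth functions `χ 1, …, χ N : G → ℝ` with values in `[0,1]`,
supported in `U`, such that `∑ k, χ k (x k⁻¹ * z) = 1` for every `z ∈ G`. -/
theorem compact_lieGroup_partition_of_unity
    {E : Type*} [NormedAddCommGroup E] [NormedSpace ℝ E]
    {H : Type*} [TopologicalSpace H] (I : ModelWithCorners ℝ E H)
    (G : Type*) [TopologicalSpace G] [ChartedSpace H G] [Group G] [LieGroup I (⊤ : ℕ∞) G]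
    [CompactSpace G]
    (U : Set G) (hU : IsOpen U) (heU : (1 : G) ∈ U) :
    ∃ (N : ℕ) (x : Fin N → G) (χ : Fin N → G → ℝ),
      (∀ k, ContMDiff I 𝓘(ℝ) (⊤ : ℕ∞) (χ k)) ∧
      (∀ k z, χ k z ∈ Set.Icc (0 : ℝ) 1) ∧
      (∀ k, Function.support (χ k) ⊆ U) ∧
      (∀ z : G, ∑ k : Fin N, χ k ((x k)⁻¹ * z) = 1) := by
  -- a T1 topological group is Hausdorff, and a compact Hausdorff manifold is finite-dimensional
  have : IsTopologicalGroup G := topologicalGroup_of_lieGroup I ∞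
  have : T1Space G := I.t1Space G
  have : FiniteDimensional ℝ E := FiniteDimensional.of_locallyCompact_manifold G I
  -- the left translates `g • U` cover `G`; pulling a partition of unity subordinate to them
  -- back along `y ↦ g * y` moves every support into `U`
  obtain ⟨N, x, ρ, hρ, hρI, hρU, hρ1⟩ := exists_fin_smoothPartitionOfUnity_of_compactSpace I
    (fun g ↦ g • U) (fun g ↦ hU.smul g)
    (iUnion_eq_univ_iff.2 fun z ↦ ⟨z, mem_smul_set.2 ⟨1, heU, mul_one z⟩⟩)
  refine ⟨N, x, fun k y ↦ ρ k (x k * y), fun k ↦ (hρ k).comp contMDiff_mul_left,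
    fun k y ↦ hρI k _, fun k y hy ↦ ?_, fun z ↦ by simpa only [mul_inv_cancel_left] using hρ1 z⟩
  simpa [mem_smul_set_iff_inv_smul_mem] using hρU k (subset_tsupport _ hy)
end
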